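/- For nonnegative integers s, t, r with s > t, the sum over all ballot paths D from (0,0) to (s+t, s-t) with at least r marked returns of q^{vmr(D)} equals q^{binomial(r+1,2)} * qbinom(s+t, s+r). -/

import Mathlib

open Finset
open scoped Classical

/-- `(q;q)_n` as a formal power series over `ℚ`. -/
noncomputable def qp (n : ℕ) : PowerSeries ℚ :=
  ∏ i ∈ Finset.range n, (1 - (PowerSeries.X : PowerSeries ℚ) ^ (i + 1))

/-- The Gaussian binomial coefficient `qbinom(n,k)`. -/
noncomputable def qbin (n k : ℕ) : PowerSeries ℚ :=
  if k ≤ n then qp n * (qp k * qp (n - k))⁻¹ else 0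

/-- Height of the lattice path (steps `true` = up `(1,1)`, `false` = down `(1,-1)`)
after the first `k` steps. -/
def ht {L : ℕ} (p : Fin L → Bool) (k : ℕ) : ℤ :=
  ∑ i ∈ Finset.univ.filter (fun i : Fin L => (i : ℕ) < k), (if p i then (1 : ℤ) else -1)

/-- `p` is a ballot path from `(0,0)` to `(s+t, s-t)`: `s` up-steps, `t` down-steps,
never passing below the `x`-axis. -/
def IsBallot {L : ℕ} (p : Fin L → Bool) (s t : ℕ) : Prop :=
  (Finset.univ.filter fun i => p i = true).card = s ∧
  (Finset.univ.filter fun i => p i = false).card = t ∧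
  ∀ k : ℕ, 0 ≤ ht p k

/-- The point with `x`-coordinate `i` is a valley: the step before it is a down-step
and the step after it is an up-step. -/
def IsValley {L : ℕ} (p : Fin L → Bool) (i : Fin L) : Prop :=
  ∃ _ : 1 ≤ (i : ℕ),
    p ⟨(i : ℕ) - 1, lt_of_le_of_lt (Nat.sub_le _ _) i.isLt⟩ = false ∧ p i = true

/-- A return is a valley on the `x`-axis. -/
def IsReturn {L : ℕ} (p : Fin L → Bool) (i : Fin L) : Prop :=
  IsValley p i ∧ ht p (i : ℕ) = 0

/-- `maj`: sum of the `x`-coordinates of the valleys. -/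
noncomputable def pmaj {L : ℕ} (p : Fin L → Bool) : ℕ :=
  ∑ i ∈ Finset.univ.filter (fun i => IsValley p i), (i : ℕ)

/-- `vmr(D) = maj(D) - (1/2) Σ (x-coordinates of marked returns)`;
the marked returns have even `x`-coordinates, so this is an integer. -/
noncomputable def vmr {L : ℕ} (p : Fin L → Bool) (M : Finset (Fin L)) : ℕ :=
  pmaj p - (∑ i ∈ M, (i : ℕ)) / 2

/-!
Decompose a marked ballot path according to its last step. Removing a final down step changes
nothing. Removing a final up step removes the valley at `x = L` when the path before it ended with
a down step, lowering `maj` by `L`; if that valley lies on the axis (possible only when `s = t`) it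
may also be marked, and then it contributes `L / 2 = t` and one mark instead. Writing `G(s,t,r)`
for the full sum and `H(s,t,r)` for the sum over paths ending with an up step, this gives
recursions in `s + t` that are satisfied by `q^{C(r+1,2)} [s+t, s+r]` and
`q^{C(r+1,2)+(t-r)} [s+t-1, s+r-1]` thanks to the two q-Pascal rules.
-/

open PowerSeries

section Paths

variable {L : ℕ}

lemma ht_snoc_of_le (q : Fin L → Bool) (b : Bool) {k : ℕ} (hk : k ≤ L) :
    ht (Fin.snoc q b : Fin (L + 1) → Bool) k = ht q k := by
  simp [ht, sum_filter, Fin.sum_univ_castSucc, hk.not_gt]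

lemma ht_snoc_length (q : Fin L → Bool) (b : Bool) :
    ht (Fin.snoc q b : Fin (L + 1) → Bool) (L + 1) = ht q L + if b then 1 else -1 := by
  simp [ht, sum_filter, Fin.sum_univ_castSucc]

lemma ht_of_length_le (p : Fin L → Bool) {k : ℕ} (hk : L ≤ k) : ht p k = ht p L := by
  unfold ht
  congr 1
  ext i
  simp only [mem_filter, mem_univ, true_and]
  omega

lemma card_filter_snoc_eq (q : Fin L → Bool) (b c : Bool) :
    #{i | (Fin.snoc q b : Fin (L + 1) → Bool) i = c} =
      #{j | q j = c} + if b = c then 1 else 0 := by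
  simp only [card_filter, Fin.sum_univ_castSucc, Fin.snoc_castSucc, Fin.snoc_last]

lemma IsBallot.length_eq {p : Fin L → Bool} {s t : ℕ} (h : IsBallot p s t) : L = s + t := by
  have := card_filter_add_card_filter_not (s := univ) (fun i => p i = true)
  simp only [Bool.not_eq_true, card_univ, Fintype.card_fin] at this
  rw [← h.1, ← h.2.1, this]

lemma IsBallot.ht_length {p : Fin L → Bool} {s t : ℕ} (h : IsBallot p s t) :
    ht p L = s - t := by
  simp [ht, sum_ite, sub_eq_add_neg, h.1, h.2.1]

lemma ht_snoc_nonneg_iff (q : Fin L → Bool) (b : Bool) :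
    (∀ k, 0 ≤ ht (Fin.snoc q b : Fin (L + 1) → Bool) k) ↔
      (∀ k, 0 ≤ ht q k) ∧ 0 ≤ ht q L + if b then 1 else -1 := by
  rw [← ht_snoc_length]
  refine ⟨fun h => ⟨fun k => ?_, h _⟩, fun ⟨hq, hL⟩ k => ?_⟩
  · rcases le_or_gt k L with hk | hk
    · simpa [ht_snoc_of_le q b hk] using h k
    · simpa [ht_of_length_le q hk.le, ht_snoc_of_le q b le_rfl] using h L
  · rcases le_or_gt k L with hk | hk
    · simpa [ht_snoc_of_le q b hk] using hq k
    · rwa [ht_of_length_le _ hk]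

lemma isBallot_snoc_true_iff {q : Fin L → Bool} {s t : ℕ} :
    IsBallot (Fin.snoc q true : Fin (L + 1) → Bool) (s + 1) t ↔ IsBallot q s t := by
  simp only [IsBallot, card_filter_snoc_eq, ht_snoc_nonneg_iff]
  refine ⟨fun ⟨h1, h2, h3, _⟩ => ⟨by simpa using h1, by simpa using h2, h3⟩,
    fun ⟨h1, h2, h3⟩ => ⟨by simp [h1], by simp [h2], h3, ?_⟩⟩
  have := h3 L
  rw [if_pos trivial]
  omega

lemma isBallot_snoc_false_iff {q : Fin L → Bool} {s t : ℕ} :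
    IsBallot (Fin.snoc q false : Fin (L + 1) → Bool) s (t + 1) ↔ IsBallot q s t ∧ t < s := by
  simp only [IsBallot, card_filter_snoc_eq, ht_snoc_nonneg_iff]
  constructor
  · rintro ⟨h1, h2, h3, hL⟩
    have hq : IsBallot q s t := ⟨by simpa using h1, by simpa using h2, h3⟩
    rw [hq.ht_length, if_neg Bool.false_ne_true] at hL
    exact ⟨hq, by omega⟩
  · rintro ⟨hq, hts⟩
    refine ⟨by simp [hq.1], by simp [hq.2.1], hq.2.2, ?_⟩
    rw [IsBallot.ht_length hq, if_neg Bool.false_ne_true]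
    omega

lemma not_isBallot_snoc_true_self (q : Fin L → Bool) (s : ℕ) :
    ¬ IsBallot (Fin.snoc q true : Fin (L + 1) → Bool) s s := by
  intro h
  have hL := h.ht_length
  rw [ht_snoc_length, if_pos rfl, sub_self] at hL
  have := h.2.2 L
  rw [ht_snoc_of_le q true le_rfl] at this
  omega

lemma not_isBallot_snoc_false_zero (q : Fin L → Bool) (s : ℕ) :
    ¬ IsBallot (Fin.snoc q false : Fin (L + 1) → Bool) s 0 := by
  intro h
  have := h.2.1
  simp [card_filter_snoc_eq] at this

end Paths

section Valleys

variable {L : ℕ}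

lemma snoc_mk_of_lt (q : Fin L → Bool) (b : Bool) {m : ℕ} (hm : m < L) :
    (Fin.snoc q b : Fin (L + 1) → Bool) ⟨m, by omega⟩ = q ⟨m, hm⟩ :=
  Fin.snoc_castSucc (α := fun _ => Bool) b q ⟨m, hm⟩

lemma isValley_snoc_castSucc (q : Fin L → Bool) (b : Bool) (j : Fin L) :
    IsValley (Fin.snoc q b : Fin (L + 1) → Bool) j.castSucc ↔ IsValley q j := by
  simp only [IsValley, Fin.val_castSucc, snoc_mk_of_lt q b (by omega : (j : ℕ) - 1 < L),
    Fin.snoc_castSucc]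

lemma isValley_snoc_last_succ (q : Fin (L + 1) → Bool) (b : Bool) :
    IsValley (Fin.snoc q b : Fin (L + 2) → Bool) (Fin.last (L + 1)) ↔
      q (Fin.last L) = false ∧ b = true := by
  simp only [IsValley, Fin.val_last, snoc_mk_of_lt q b (by omega : L + 1 - 1 < L + 1),
    Fin.snoc_last]
  simp [Fin.last]

lemma not_isValley_snoc_false_last (q : Fin L → Bool) :
    ¬ IsValley (Fin.snoc q false : Fin (L + 1) → Bool) (Fin.last L) := by
  rintro ⟨-, -, h⟩
  simp at h

lemma isReturn_snoc_castSucc (q : Fin L → Bool) (b : Bool) (j : Fin L) :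
    IsReturn (Fin.snoc q b : Fin (L + 1) → Bool) j.castSucc ↔ IsReturn q j := by
  rw [IsReturn, IsReturn, isValley_snoc_castSucc, Fin.val_castSucc, ht_snoc_of_le q b j.isLt.le]

lemma isReturn_snoc_last_iff (q : Fin L → Bool) (b : Bool) :
    IsReturn (Fin.snoc q b : Fin (L + 1) → Bool) (Fin.last L) ↔
      IsValley (Fin.snoc q b : Fin (L + 1) → Bool) (Fin.last L) ∧ ht q L = 0 := by
  rw [IsReturn, Fin.val_last, ht_snoc_of_le q b le_rfl]

lemma forall_isReturn_snoc_map_iff (q : Fin L → Bool) (b : Bool) (N : Finset (Fin L)) :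
    (∀ i ∈ N.map Fin.castSuccEmb, IsReturn (Fin.snoc q b : Fin (L + 1) → Bool) i) ↔
      ∀ j ∈ N, IsReturn q j := by
  simp [isReturn_snoc_castSucc]

lemma pmaj_snoc (q : Fin L → Bool) (b : Bool) :
    pmaj (Fin.snoc q b : Fin (L + 1) → Bool) =
      pmaj q + if IsValley (Fin.snoc q b : Fin (L + 1) → Bool) (Fin.last L) then L else 0 := by
  simp only [pmaj, sum_filter, Fin.sum_univ_castSucc, isValley_snoc_castSucc, Fin.val_castSucc,
    Fin.val_last]

lemma sum_div_two_le_pmaj {q : Fin L → Bool} {N : Finset (Fin L)}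
    (hN : ∀ j ∈ N, IsReturn q j) :
    (∑ j ∈ N, (j : ℕ)) / 2 ≤ pmaj q :=
  (Nat.div_le_self _ _).trans (sum_le_sum_of_subset fun j hj => by simpa using (hN j hj).1)

lemma vmr_snoc_map {q : Fin L → Bool} {N : Finset (Fin L)} (hN : ∀ j ∈ N, IsReturn q j)
    (b : Bool) :
    vmr (Fin.snoc q b : Fin (L + 1) → Bool) (N.map Fin.castSuccEmb) =
      vmr q N + if IsValley (Fin.snoc q b : Fin (L + 1) → Bool) (Fin.last L) then L else 0 := by
  have := sum_div_two_le_pmaj hN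
  rw [vmr, vmr, pmaj_snoc, sum_map]
  simp only [Fin.coe_castSuccEmb, Fin.val_castSucc]
  omega

lemma vmr_snoc_insert_last {q : Fin L → Bool} {N : Finset (Fin L)}
    (hN : ∀ j ∈ N, IsReturn q j) {u : ℕ} (hL : L = u + u) (b : Bool)
    (hv : IsValley (Fin.snoc q b : Fin (L + 1) → Bool) (Fin.last L)) :
    vmr (Fin.snoc q b : Fin (L + 1) → Bool) (insert (Fin.last L) (N.map Fin.castSuccEmb)) =
      vmr q N + u := by
  have := sum_div_two_le_pmaj hN
  rw [vmr, vmr, pmaj_snoc, if_pos hv, sum_insert (by simp), sum_map]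
  simp only [Fin.coe_castSuccEmb, Fin.val_castSucc, Fin.val_last]
  omega

end Valleys

section MarkedWeight

variable {L : ℕ}

noncomputable def markedWeight (s t r : ℕ) (p : Fin L → Bool) (M : Finset (Fin L)) :
    PowerSeries ℚ :=
  if IsBallot p s t ∧ (∀ i ∈ M, IsReturn p i) ∧ r ≤ M.card then X ^ vmr p M else 0

lemma markedWeight_snoc_false_map {s t : ℕ} (r : ℕ) (hts : t < s) (q : Fin L → Bool)
    (N : Finset (Fin L)) :
    markedWeight s (t + 1) r (Fin.snoc q false : Fin (L + 1) → Bool) (N.map Fin.castSuccEmb) =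
      markedWeight s t r q N := by
  simp only [markedWeight, isBallot_snoc_false_iff, forall_isReturn_snoc_map_iff, card_map,
    and_iff_left hts]
  split_ifs with h
  · rw [vmr_snoc_map h.2.1, if_neg (not_isValley_snoc_false_last q), add_zero]
  · rfl

lemma markedWeight_snoc_false_insert_last (s t r : ℕ) (q : Fin L → Bool)
    (M : Finset (Fin (L + 1))) :
    markedWeight s t r (Fin.snoc q false : Fin (L + 1) → Bool) (insert (Fin.last L) M) = 0 :=
  if_neg fun ⟨_, hM, _⟩ => not_isValley_snoc_false_last q (hM _ (mem_insert_self _ _)).1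

lemma markedWeight_snoc_true_map (s t r : ℕ) (q : Fin L → Bool) (N : Finset (Fin L)) :
    markedWeight (s + 1) t r (Fin.snoc q true : Fin (L + 1) → Bool) (N.map Fin.castSuccEmb) =
      X ^ (if IsValley (Fin.snoc q true : Fin (L + 1) → Bool) (Fin.last L) then L else 0) *
        markedWeight s t r q N := by
  simp only [markedWeight, isBallot_snoc_true_iff, forall_isReturn_snoc_map_iff, card_map]
  by_cases h : IsBallot q s t ∧ (∀ j ∈ N, IsReturn q j) ∧ r ≤ #N
  · rw [if_pos h, if_pos h, vmr_snoc_map h.2.1, pow_add, mul_comm]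
  · rw [if_neg h, if_neg h, mul_zero]

lemma markedWeight_snoc_true_insert_last (s t r : ℕ) (q : Fin L → Bool) (N : Finset (Fin L)) :
    markedWeight (s + 1) t r (Fin.snoc q true : Fin (L + 1) → Bool)
        (insert (Fin.last L) (N.map Fin.castSuccEmb)) =
      if IsValley (Fin.snoc q true : Fin (L + 1) → Bool) (Fin.last L) ∧ s = t then
        X ^ t * markedWeight s t (r - 1) q N
      else 0 := by
  have hcard : #(insert (Fin.last L) (N.map Fin.castSuccEmb)) = #N + 1 := by
    rw [card_insert_of_notMem (by simp), card_map]
  simp only [markedWeight, isBallot_snoc_true_iff, forall_mem_insert,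
    forall_isReturn_snoc_map_iff, isReturn_snoc_last_iff, hcard]
  by_cases hv : IsValley (Fin.snoc q true : Fin (L + 1) → Bool) (Fin.last L) ∧ s = t
  · obtain ⟨hv, rfl⟩ := hv
    simp only [hv, true_and, and_true, if_true]
    by_cases h : IsBallot q s s ∧ (∀ j ∈ N, IsReturn q j) ∧ r - 1 ≤ #N
    · have hL : ht q L = 0 := by rw [h.1.ht_length, sub_self]
      have h' : IsBallot q s s ∧ (ht q L = 0 ∧ ∀ j ∈ N, IsReturn q j) ∧ r ≤ #N + 1 :=
        ⟨h.1, ⟨hL, h.2.1⟩, Nat.le_add_of_sub_le h.2.2⟩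
      rw [if_pos h, if_pos h', vmr_snoc_insert_last h.2.1 h.1.length_eq true hv, pow_add,
        mul_comm]
    · have h' :
          ¬ (IsBallot q s s ∧ (ht q L = 0 ∧ ∀ j ∈ N, IsReturn q j) ∧ r ≤ #N + 1) :=
        fun h' => h ⟨h'.1, h'.2.1.2, Nat.sub_le_of_le_add h'.2.2⟩
      rw [if_neg h, if_neg h', mul_zero]
  · rw [if_neg hv, if_neg]
    rintro ⟨hq, ⟨⟨hv', hL⟩, -⟩, -⟩
    rw [hq.ht_length, sub_eq_zero, Nat.cast_inj] at hL
    exact hv ⟨hv', hL⟩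

end MarkedWeight

section Sums

variable {L : ℕ}

lemma sum_finset_fin_succ {M : Type*} [AddCommMonoid M] (f : Finset (Fin (L + 1)) → M) :
    ∑ S, f S = ∑ N : Finset (Fin L),
      (f (N.map Fin.castSuccEmb) + f (insert (Fin.last L) (N.map Fin.castSuccEmb))) := by
  have hpow : (univ.map Fin.castSuccEmb).powerset
      = (univ : Finset (Finset (Fin L))).map (mapEmbedding Fin.castSuccEmb).toEmbedding := by
    ext S
    simp [subset_map_iff, eq_comm]
  rw [← powerset_univ, Fin.univ_castSuccEmb, cons_eq_insert, sum_powerset_insert (by simp), hpow,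
    sum_map, sum_map, ← sum_add_distrib]
  rfl

lemma sum_fun_fin_succ {M : Type*} [AddCommMonoid M] (f : (Fin (L + 1) → Bool) → M) :
    ∑ p, f p = ∑ b, ∑ q : Fin L → Bool, f (Fin.snoc q b) := by
  rw [← Fintype.sum_prod_type']
  exact (Fintype.sum_equiv (Fin.snocEquiv fun _ => Bool) _ _ fun _ => rfl).symm

variable (L) in
noncomputable def ballotSum (s t r : ℕ) : PowerSeries ℚ :=
  ∑ p : Fin L → Bool, ∑ M, markedWeight s t r p M

variable (L) in
noncomputable def ballotSumSnoc (s t r : ℕ) (b : Bool) : PowerSeries ℚ :=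
  ∑ q : Fin L → Bool, ∑ M, markedWeight s t r (Fin.snoc q b : Fin (L + 1) → Bool) M

lemma ballotSum_succ (s t r : ℕ) :
    ballotSum (L + 1) s t r = ballotSumSnoc L s t r true + ballotSumSnoc L s t r false := by
  rw [ballotSum, sum_fun_fin_succ, Fintype.sum_bool, ballotSumSnoc, ballotSumSnoc]

lemma ballotSumSnoc_false_succ {s t : ℕ} (r : ℕ) (hts : t < s) :
    ballotSumSnoc L s (t + 1) r false = ballotSum L s t r := by
  simp only [ballotSumSnoc, ballotSum, sum_finset_fin_succ, markedWeight_snoc_false_map r hts,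
    markedWeight_snoc_false_insert_last, add_zero]

lemma ballotSumSnoc_false_zero (s r : ℕ) : ballotSumSnoc L s 0 r false = 0 :=
  sum_eq_zero fun q _ => sum_eq_zero fun _ _ =>
    if_neg fun h => not_isBallot_snoc_false_zero q s h.1

lemma ballotSumSnoc_true_self (s r : ℕ) : ballotSumSnoc L s s r true = 0 :=
  sum_eq_zero fun q _ => sum_eq_zero fun _ _ =>
    if_neg fun h => not_isBallot_snoc_true_self q s h.1

lemma ballotSumSnoc_succ_true (s t r : ℕ) :
    ballotSumSnoc (L + 1) (s + 1) t r true =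
      ballotSumSnoc L s t r true + X ^ (L + 1) * ballotSumSnoc L s t r false +
        if s = t then X ^ t * ballotSumSnoc L s t (r - 1) false else 0 := by
  simp only [ballotSumSnoc, sum_finset_fin_succ (L := L + 1), markedWeight_snoc_true_map,
    markedWeight_snoc_true_insert_last, isValley_snoc_last_succ, and_true]
  rw [sum_fun_fin_succ, Fintype.sum_bool]
  simp only [Fin.snoc_last, Bool.true_eq_false, false_and, if_false, if_true, true_and, pow_zero,
    one_mul, add_zero, sum_add_distrib, mul_sum]
  split_ifs <;> simp only [sum_const_zero, add_zero, add_assoc]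

lemma ballotSumSnoc_zero_true (r : ℕ) : ballotSumSnoc 0 1 0 r true = if r = 0 then 1 else 0 := by
  have hv (q : Fin 0 → Bool) : ¬ IsValley (Fin.snoc q true : Fin 1 → Bool) (Fin.last 0) := by
    simp [IsValley]
  simp only [ballotSumSnoc, sum_finset_fin_succ, markedWeight_snoc_true_map,
    markedWeight_snoc_true_insert_last, hv, false_and, if_false, pow_zero, one_mul, add_zero,
    Fintype.sum_unique]
  simp [markedWeight, IsBallot, ht, vmr, pmaj, ← Unique.eq_default (∅ : Finset (Fin 0))]

end Sums

section QBinomial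

lemma isUnit_qp (n : ℕ) : IsUnit (qp n) :=
  PowerSeries.isUnit_iff_constantCoeff.2 (by simp [qp])

lemma qp_succ (n : ℕ) : qp (n + 1) = qp n * (1 - X ^ (n + 1)) :=
  prod_range_succ _ n

lemma qbin_mul_qp_mul_qp {n k : ℕ} (h : k ≤ n) : qbin n k * (qp k * qp (n - k)) = qp n := by
  rw [qbin, if_pos h, mul_assoc, PowerSeries.inv_mul_cancel]
  · exact mul_one _
  · simpa using ((isUnit_qp k).mul (isUnit_qp (n - k))).map PowerSeries.constantCoeff

lemma qbin_eq_of_mul_qp_mul_qp {n k : ℕ} (h : k ≤ n) {f : PowerSeries ℚ}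
    (hf : f * (qp k * qp (n - k)) = qp n) : qbin n k = f :=
  ((isUnit_qp k).mul (isUnit_qp (n - k))).mul_right_cancel (by rw [hf, qbin_mul_qp_mul_qp h])

lemma qbin_of_lt {n k : ℕ} (h : n < k) : qbin n k = 0 :=
  if_neg h.not_ge

lemma qbin_self (n : ℕ) : qbin n n = 1 :=
  qbin_eq_of_mul_qp_mul_qp le_rfl (by simp [qp])

lemma qbin_sub (n : ℕ) {k : ℕ} (h : k ≤ n) : qbin n (n - k) = qbin n k := by
  rw [qbin, qbin, if_pos h, if_pos (Nat.sub_le n k), Nat.sub_sub_self h, mul_comm (qp k)]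

lemma qbin_mul_qp_succ_mul_qp_succ (k m : ℕ) :
    qbin (k + 1 + m) k * (qp (k + 1) * qp (m + 1)) = qp (k + 1 + m) * (1 - X ^ (k + 1)) ∧
      qbin (k + 1 + m) (k + 1) * (qp (k + 1) * qp (m + 1)) =
        qp (k + 1 + m) * (1 - X ^ (m + 1)) := by
  have h1 := qbin_mul_qp_mul_qp (by omega : k ≤ k + 1 + m)
  have h2 := qbin_mul_qp_mul_qp (by omega : k + 1 ≤ k + 1 + m)
  rw [show k + 1 + m - k = m + 1 by omega, qp_succ m] at h1
  rw [show k + 1 + m - (k + 1) = m by omega] at h2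
  constructor
  · rw [qp_succ k, qp_succ m]
    linear_combination (1 - X ^ (k + 1)) * h1
  · rw [qp_succ m]
    linear_combination (1 - X ^ (m + 1)) * h2

lemma qbin_succ_succ (n k : ℕ) :
    qbin (n + 1) (k + 1) = qbin n k + X ^ (k + 1) * qbin n (k + 1) := by
  rcases lt_trichotomy n k with hnk | rfl | hkn
  · rw [qbin_of_lt (by omega), qbin_of_lt hnk, qbin_of_lt (by omega), mul_zero, add_zero]
  · rw [qbin_self, qbin_self, qbin_of_lt n.lt_succ_self, mul_zero, add_zero]
  obtain ⟨m, rfl⟩ : ∃ m, n = k + 1 + m := ⟨n - (k + 1), by omega⟩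
  obtain ⟨h1, h2⟩ := qbin_mul_qp_succ_mul_qp_succ k m
  apply qbin_eq_of_mul_qp_mul_qp (by omega)
  rw [show k + 1 + m + 1 - (k + 1) = m + 1 by omega, qp_succ (k + 1 + m)]
  linear_combination h1 + X ^ (k + 1) * h2

lemma qbin_succ_succ' (n k : ℕ) :
    qbin (n + 1) (k + 1) = X ^ (n - k) * qbin n k + qbin n (k + 1) := by
  rcases lt_trichotomy n k with hnk | rfl | hkn
  · rw [qbin_of_lt (by omega), qbin_of_lt hnk, qbin_of_lt (by omega), mul_zero, add_zero]
  · rw [qbin_self, qbin_self, qbin_of_lt n.lt_succ_self, Nat.sub_self, pow_zero, one_mul,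
      add_zero]
  obtain ⟨m, rfl⟩ : ∃ m, n = k + 1 + m := ⟨n - (k + 1), by omega⟩
  obtain ⟨h1, h2⟩ := qbin_mul_qp_succ_mul_qp_succ k m
  apply qbin_eq_of_mul_qp_mul_qp (by omega)
  rw [show k + 1 + m + 1 - (k + 1) = m + 1 by omega, show k + 1 + m - k = m + 1 by omega,
    qp_succ (k + 1 + m)]
  linear_combination X ^ (m + 1) * h1 + h2

end QBinomial

section ClosedForm

variable {L : ℕ}

def BallotSumFormula (L : ℕ) : Prop :=
  ∀ s t r, s + t = L → t < s → ballotSum L s t r = X ^ (r + 1).choose 2 * qbin L (s + r)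

/-- For `r > t` the truncated `t - r` is harmless: `qbin L (s + r)` vanishes. -/
def BallotSumSnocTrueFormula (L : ℕ) : Prop :=
  ∀ s t r, s + t = L → t ≤ s →
    ballotSumSnoc L (s + 1) t r true = X ^ ((r + 1).choose 2 + (t - r)) * qbin L (s + r)

lemma ballotSumSnoc_false_eq (hG : BallotSumFormula L) {s t : ℕ} (r : ℕ) (hst : s + t = L + 1)
    (hts : t ≤ s) : ballotSumSnoc L s t r false = X ^ (r + 1).choose 2 * qbin L (s + r) := by
  cases t with
  | zero => rw [ballotSumSnoc_false_zero, qbin_of_lt (by omega), mul_zero]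
  | succ t => rw [ballotSumSnoc_false_succ r (by omega), hG s t r (by omega) (by omega)]

lemma ballotSumSnocTrueFormula_zero : BallotSumSnocTrueFormula 0 := by
  rintro s t r hst -
  obtain ⟨rfl, rfl⟩ : s = 0 ∧ t = 0 := by omega
  rw [ballotSumSnoc_zero_true]
  cases r with
  | zero => simp [qbin_self]
  | succ r => rw [if_neg r.succ_ne_zero, qbin_of_lt (by omega), mul_zero]

lemma BallotSumFormula.succ (hH : BallotSumSnocTrueFormula L) (hG : BallotSumFormula L) :
    BallotSumFormula (L + 1) := by
  intro s t r hst hts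
  obtain ⟨s, rfl⟩ : ∃ s', s = s' + 1 := ⟨s - 1, by omega⟩
  rw [ballotSum_succ, hH s t r (by omega) (by omega), ballotSumSnoc_false_eq hG r hst hts.le,
    show s + 1 + r = s + r + 1 by ring, qbin_succ_succ', show L - (s + r) = t - r by omega]
  ring

lemma ballotSumSnoc_succ_true_of_lt (hH : BallotSumSnocTrueFormula L)
    (hG : BallotSumFormula L) {s t : ℕ} (r : ℕ) (hst : s + t = L + 1) (hts : t < s) :
    ballotSumSnoc (L + 1) (s + 1) t r true =
      X ^ ((r + 1).choose 2 + (t - r)) * qbin (L + 1) (s + r) := by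
  obtain ⟨s, rfl⟩ : ∃ s', s = s' + 1 := ⟨s - 1, by omega⟩
  rw [ballotSumSnoc_succ_true, if_neg hts.ne', add_zero, hH s t r (by omega) (by omega),
    ballotSumSnoc_false_eq hG r (by omega) hts.le, show s + 1 + r = s + r + 1 by ring,
    qbin_succ_succ]
  by_cases hrt : r ≤ t
  · rw [show L + 1 = (t - r) + (s + r + 1) by omega]
    ring
  · rw [qbin_of_lt (by omega : L < s + r + 1)]
    ring

lemma ballotSumSnoc_succ_true_self (hG : BallotSumFormula L) {s : ℕ} (r : ℕ)
    (hs : s + s = L + 1) :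
    ballotSumSnoc (L + 1) (s + 1) s r true =
      X ^ ((r + 1).choose 2 + (s - r)) * qbin (L + 1) (s + r) := by
  rw [ballotSumSnoc_succ_true, if_pos rfl, ballotSumSnoc_true_self, zero_add,
    ballotSumSnoc_false_eq hG r (by omega) le_rfl,
    ballotSumSnoc_false_eq hG (r - 1) (by omega) le_rfl]
  obtain ⟨s, rfl⟩ : ∃ s', s = s' + 1 := ⟨s - 1, by omega⟩
  cases r with
  | zero =>
    simp only [Nat.zero_sub, Nat.sub_zero, add_zero, zero_add, show Nat.choose 1 2 = 0 from rfl,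
      pow_zero, one_mul]
    rw [qbin_succ_succ, ← qbin_sub L (by omega : s + 1 ≤ L), show L - (s + 1) = s by omega,
      show L + 1 = (s + 1) + (s + 1) by omega]
    ring
  | succ r =>
    rw [Nat.add_sub_cancel, show s + 1 + (r + 1) = s + 1 + r + 1 by ring, qbin_succ_succ]
    by_cases hrs : r ≤ s
    · obtain ⟨a, rfl⟩ : ∃ a, s = r + a := ⟨s - r, by omega⟩
      rw [Nat.choose_succ_succ' (r + 1), Nat.choose_one_right, Nat.add_sub_add_right,
        Nat.add_sub_cancel_left, show L + 1 = (r + a + 1) + (r + a + 1) by omega]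
      ring
    · rw [qbin_of_lt (by omega : L < s + 1 + r), qbin_of_lt (by omega : L < s + 1 + r + 1)]
      ring

lemma BallotSumSnocTrueFormula.succ (hH : BallotSumSnocTrueFormula L)
    (hG : BallotSumFormula L) :
    BallotSumSnocTrueFormula (L + 1) := by
  intro s t r hst hts
  rcases hts.lt_or_eq with hts | rfl
  · exact ballotSumSnoc_succ_true_of_lt hH hG r hst hts
  · exact ballotSumSnoc_succ_true_self hG r hst

lemma ballotSumSnocTrueFormula_and_ballotSumFormula (L : ℕ) :
    BallotSumSnocTrueFormula L ∧ BallotSumFormula L := by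
  induction L with
  | zero => exact ⟨ballotSumSnocTrueFormula_zero, fun s t r hst hts => by omega⟩
  | succ L ih => exact ⟨ih.1.succ ih.2, ih.2.succ ih.1⟩

end ClosedForm

/-- The sum of `q^{vmr(D)}` over all ballot paths `D` from `(0,0)` to `(s+t, s-t)`
with at least `r` marked returns equals `q^{C(r+1,2)} qbinom(s+t, s+r)`. -/
theorem stmt_2 (s t r : ℕ) (hst : t < s) :
    ∑ x ∈ (Finset.univ : Finset ((Fin (s + t) → Bool) × Finset (Fin (s + t)))).filter
        (fun x => IsBallot x.1 s t ∧
          (∀ i ∈ x.2, IsReturn x.1 i) ∧ r ≤ x.2.card),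
      (PowerSeries.X : PowerSeries ℚ) ^ vmr x.1 x.2
      = PowerSeries.X ^ ((r + 1).choose 2) * qbin (s + t) (s + r) := by
  rw [← (ballotSumSnocTrueFormula_and_ballotSumFormula (s + t)).2 s t r rfl hst, ballotSum,
    ← Fintype.sum_prod_type', sum_filter]
  rfl
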